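/- arXiv:1004.4062 — 4 statements merged into one kernel-verified Lean document; each statement's English description precedes it below -/
import Mathlib

section
/- Let p be a probability distribution on a countable alphabet with 0 < p_1 < 1 (where p_1 is the probability of the smallest letter), and let P_n be the product measure on words of length n. Then the probability that a word of length n is NOT primitive is O(‖p‖_2^n); i.e. there exists a constant C such that for all n ≥ 2, P_n({w ∈ A^n : w is not primitive}) ≤ C · (∑_i p_i^2)^{n/2}. -/
/-!
A non-primitive word of length `n` is `v ^ (n / k)` for a word `v` of length `k`, `k` a proper
divisor of `n`, and these powers have total weight
`(∑ pᵢ ^ (n / k)) ^ k ≤ (Q s ^ (n / k - 2)) ^ k`, where `Q = ∑ pᵢ²` and `s` bounds every `pᵢ`.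
Since two letters have positive mass, `s` can be taken `< √Q`; the union bound over `k` then
gives at most `√Q ^ n ∑ₘ (s / √Q) ^ m`, a geometric series. Weights are handled in `ℝ≥0∞`,
where no summability side conditions arise.
-/

/-- A word `w` of length `n` is a power of a word of length `k`. -/
def IsPowerOf (n k : ℕ) (hk : 0 < k) (w : Fin n → ℕ) : Prop :=
  ∃ v : Fin k → ℕ, ∀ i : Fin n, w i = v ⟨(i : ℕ) % k, Nat.mod_lt _ hk⟩

/-- A word of length `n` is primitive if it is not a proper power. -/
def Primitive (n : ℕ) (hn : 0 < n) (w : Fin n → ℕ) : Prop :=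
  ∀ k, ∀ hkd : k ∣ n, k < n → ¬ IsPowerOf n k (Nat.pos_of_dvd_of_pos hkd hn) w

open scoped ENNReal
open Finset

theorem ENNReal.tsum_fin_pi_prod {β : Type*} (k : ℕ) (g : Fin k → β → ℝ≥0∞) :
    ∑' v : Fin k → β, ∏ j, g j (v j) = ∏ j, ∑' b, g j b := by
  induction k with
  | zero => simp
  | succ k ih =>
    rw [← (Fin.consEquiv fun _ => β).tsum_eq, Fin.prod_univ_succ, ← ih fun j => g j.succ,
      ← ENNReal.tsum_mul_right]
    simp only [Fin.consEquiv_apply, Fin.prod_univ_succ, Fin.cons_zero, Fin.cons_succ,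
      ENNReal.tsum_prod', ENNReal.tsum_mul_left]

theorem Fin.prod_comp_mod {M : Type*} [CommMonoid M] {n k : ℕ} (hk : 0 < k) (hkn : k ∣ n)
    (f : Fin k → M) : ∏ i : Fin n, f ⟨i % k, Nat.mod_lt _ hk⟩ = ∏ j, f j ^ (n / k) := by
  let e : Fin n ≃ Fin (n / k) × Fin k :=
    (finCongr (Nat.div_mul_cancel hkn).symm).trans finProdFinEquiv.symm
  have he : ∀ x, ((e.symm x : Fin n) : ℕ) % k = x.2 := fun ⟨a, j⟩ => by
    simp [e, Nat.add_mul_mod_self_left, Nat.mod_eq_of_lt j.isLt]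
  simp only [← e.symm.prod_comp, he, Fin.eta, Fintype.prod_prod_type_right, prod_const]

theorem ENNReal.tsum_pow_le_tsum_sq_mul {α : Type*} {q : α → ℝ≥0∞} {s : ℝ≥0∞}
    (hqs : ∀ a, q a ≤ s) {m : ℕ} (hm : 2 ≤ m) :
    ∑' a, q a ^ m ≤ (∑' a, q a ^ 2) * s ^ (m - 2) := by
  rw [← ENNReal.tsum_mul_right]
  refine ENNReal.tsum_le_tsum fun a => ?_
  rw [← Nat.add_sub_cancel' hm, pow_add, Nat.add_sub_cancel_left]
  gcongr
  exact hqs a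

theorem Nat.two_mul_le_of_mem_properDivisors {n k : ℕ} (hk : k ∈ n.properDivisors) :
    2 * k ≤ n := by
  obtain ⟨⟨m, rfl⟩, hlt⟩ := Nat.mem_properDivisors.mp hk
  have hm : 1 < m := by
    by_contra! hm
    interval_cases m <;> simp_all
  rw [mul_comm 2]
  exact Nat.mul_le_mul_left k hm

def periodicExt {n k : ℕ} (hk : 0 < k) (v : Fin k → ℕ) : Fin n → ℕ :=
  fun i => v ⟨i % k, Nat.mod_lt _ hk⟩

theorem tsum_prod_periodicExt {n k : ℕ} (hk : 0 < k) (hkn : k ∣ n) (q : ℕ → ℝ≥0∞) :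
    ∑' v : Fin k → ℕ, ∏ i : Fin n, q (periodicExt hk v i) = (∑' a, q a ^ (n / k)) ^ k := by
  simp only [periodicExt, Fin.prod_comp_mod hk hkn fun j => q _]
  rw [ENNReal.tsum_fin_pi_prod k fun _ a => q a ^ (n / k), prod_const, card_univ,
    Fintype.card_fin]

theorem tsum_prod_periodicExt_le {n k : ℕ} (hk : k ∈ n.properDivisors) {q : ℕ → ℝ≥0∞}
    {s : ℝ≥0∞} (hqs : ∀ a, q a ≤ s) :
    ∑' v : Fin k → ℕ, ∏ i : Fin n, q (periodicExt (Nat.pos_of_mem_properDivisors hk) v i) ≤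
      (∑' a, q a ^ 2) ^ k * s ^ (n - 2 * k) := by
  have h2k := Nat.two_mul_le_of_mem_properDivisors hk
  obtain ⟨⟨m, rfl⟩, -⟩ := Nat.mem_properDivisors.mp hk
  have hk0 := Nat.pos_of_mem_properDivisors hk
  have hm : 2 ≤ m := Nat.le_of_mul_le_mul_left (by rwa [mul_comm]) hk0
  rw [tsum_prod_periodicExt hk0 (dvd_mul_right k m), Nat.mul_div_cancel_left m hk0]
  calc (∑' a, q a ^ m) ^ k ≤ ((∑' a, q a ^ 2) * s ^ (m - 2)) ^ k := by
        gcongr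
        exact ENNReal.tsum_pow_le_tsum_sq_mul hqs hm
    _ = (∑' a, q a ^ 2) ^ k * s ^ (k * m - 2 * k) := by
        rw [mul_pow, ← pow_mul, Nat.sub_mul, Nat.mul_comm m k]

theorem ENNReal.tsum_not_primitive_le {n : ℕ} (hn : 0 < n) {q : ℕ → ℝ≥0∞} {s : ℝ≥0∞}
    (hqs : ∀ a, q a ≤ s) :
    ∑' w : {w : Fin n → ℕ // ¬ Primitive n hn w}, ∏ i, q (w.1 i) ≤
      ∑ k ∈ n.properDivisors, (∑' a, q a ^ 2) ^ k * s ^ (n - 2 * k) := by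
  let powers (k : n.properDivisors) : Set (Fin n → ℕ) :=
    Set.range (periodicExt (Nat.pos_of_mem_properDivisors k.2))
  have hcover : {w | ¬ Primitive n hn w} ⊆ ⋃ k, powers k := by
    intro w hw
    simp only [Set.mem_ofPred_eq, Primitive, not_forall, not_not] at hw
    obtain ⟨k, hkd, hlt, v, hv⟩ := hw
    exact Set.mem_iUnion.mpr
      ⟨⟨k, Nat.mem_properDivisors.mpr ⟨hkd, hlt⟩⟩, v, funext fun i => (hv i).symm⟩
  let f (w : Fin n → ℕ) : ℝ≥0∞ := ∏ i, q (w i)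
  calc ∑' w : {w : Fin n → ℕ // ¬ Primitive n hn w}, f w
      ≤ ∑' w : ↥(⋃ k, powers k), f w := ENNReal.tsum_mono_subtype f hcover
    _ ≤ ∑ k, ∑' w : powers k, f w := ENNReal.tsum_iUnion_le f powers
    _ ≤ ∑ k : n.properDivisors, (∑' a, q a ^ 2) ^ k.1 * s ^ (n - 2 * k.1) := by
        refine sum_le_sum fun k _ => le_trans ?_ (tsum_prod_periodicExt_le k.2 hqs)
        exact ENNReal.tsum_le_tsum_comp_of_surjective Set.rangeFactorization_surjective
          fun w : powers k => f w
    _ = _ := sum_coe_sort _ fun k => (∑' a, q a ^ 2) ^ k * s ^ (n - 2 * k)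

theorem exists_ne_pos_of_tsum_eq_one {α : Type*} {p : α → ℝ} (hnn : ∀ a, 0 ≤ p a)
    (htot : ∑' a, p a = 1) {a : α} (ha : p a < 1) : ∃ b, b ≠ a ∧ 0 < p b := by
  by_contra! h
  rw [tsum_eq_single a fun b hb => (h b hb).antisymm (hnn b)] at htot
  exact ha.ne htot

theorem exists_le_lt_sqrt_tsum_sq {α : Type*} {p : α → ℝ} (hnn : ∀ a, 0 ≤ p a)
    (hsq : Summable fun a => p a ^ 2) {a b : α} (hab : a ≠ b) (ha : 0 < p a) (hb : 0 < p b) :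
    ∃ s, 0 ≤ s ∧ s < √(∑' i, p i ^ 2) ∧ ∀ i, p i ≤ s := by
  set Q := ∑' i, p i ^ 2
  have hpair : ∀ i j, i ≠ j → p i ^ 2 + p j ^ 2 ≤ Q := fun i j hij => by
    classical
    simpa [sum_pair hij] using hsq.sum_le_tsum {i, j} fun k _ => sq_nonneg (p k)
  have hmin : 0 ≤ Q - min (p a ^ 2) (p b ^ 2) := by
    linarith [hpair a b hab, min_le_left (p a ^ 2) (p b ^ 2), sq_nonneg (p b)]
  refine ⟨√(Q - min (p a ^ 2) (p b ^ 2)), Real.sqrt_nonneg _, ?_, fun i => ?_⟩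
  · exact Real.sqrt_lt_sqrt hmin (by simp [ha, hb])
  · rw [Real.le_sqrt (hnn i) hmin]
    rcases eq_or_ne i a with rfl | hia
    · linarith [hpair i b hab, min_le_right (p i ^ 2) (p b ^ 2)]
    · linarith [hpair i a hia, min_le_left (p a ^ 2) (p b ^ 2)]

theorem sum_sq_pow_mul_pow_le {r s : ℝ} (hs : 0 ≤ s) (hsr : s < r) {n : ℕ} (K : Finset ℕ)
    (hK : ∀ k ∈ K, 2 * k ≤ n) :
    ∑ k ∈ K, (r ^ 2) ^ k * s ^ (n - 2 * k) ≤ (1 - s / r)⁻¹ * r ^ n := by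
  have hr : 0 < r := hs.trans_lt hsr
  set t := s / r
  have ht0 : 0 ≤ t := div_nonneg hs hr.le
  have ht1 : t < 1 := (div_lt_one hr).mpr hsr
  have hterm : ∀ k ∈ K, (r ^ 2) ^ k * s ^ (n - 2 * k) = r ^ n * t ^ (n - 2 * k) := by
    intro k hk
    obtain ⟨m, rfl⟩ := Nat.exists_eq_add_of_le (hK k hk)
    rw [Nat.add_sub_cancel_left, div_pow, ← pow_mul]
    field_simp
    ring
  have hinj : Set.InjOn (fun k => n - 2 * k) K := fun a ha b hb hab => by
    have := hK a ha; have := hK b hb; simp only at hab; omega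
  calc ∑ k ∈ K, (r ^ 2) ^ k * s ^ (n - 2 * k) = r ^ n * ∑ m ∈ K.image (n - 2 * ·), t ^ m := by
        rw [sum_congr rfl hterm, ← mul_sum, sum_image hinj]
    _ ≤ r ^ n * ∑' m, t ^ m := by
        gcongr
        exact (summable_geometric_of_lt_one ht0 ht1).sum_le_tsum _ fun m _ => pow_nonneg ht0 m
    _ = (1 - t)⁻¹ * r ^ n := by rw [tsum_geometric_of_lt_one ht0 ht1, mul_comm]

theorem tsum_eq_toReal_tsum_ofReal {α : Type*} {f : α → ℝ} (hf : ∀ a, 0 ≤ f a) :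
    ∑' a, f a = (∑' a, ENNReal.ofReal (f a)).toReal := by
  rw [ENNReal.tsum_toReal_eq fun _ => ENNReal.ofReal_ne_top]
  exact tsum_congr fun a => (ENNReal.toReal_ofReal (hf a)).symm

theorem tsum_not_primitive_le {n : ℕ} (hn : 0 < n) {p : ℕ → ℝ} (hnn : ∀ a, 0 ≤ p a)
    (hsq : Summable fun a => p a ^ 2) {s : ℝ} (hps : ∀ a, p a ≤ s) :
    ∑' w : {w : Fin n → ℕ // ¬ Primitive n hn w}, ∏ i, p (w.1 i) ≤
      ∑ k ∈ n.properDivisors, (∑' a, p a ^ 2) ^ k * s ^ (n - 2 * k) := by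
  have hQ : 0 ≤ ∑' a, p a ^ 2 := tsum_nonneg fun a => sq_nonneg _
  have hs : 0 ≤ s := (hnn 0).trans (hps 0)
  have hterm : ∀ k, 0 ≤ (∑' a, p a ^ 2) ^ k * s ^ (n - 2 * k) := fun k => by positivity
  have hweight : ∑' a, ENNReal.ofReal (p a) ^ 2 = ENNReal.ofReal (∑' a, p a ^ 2) := by
    simp_rw [← ENNReal.ofReal_pow (hnn _)]
    exact (ENNReal.ofReal_tsum_of_nonneg (fun a => sq_nonneg _) hsq).symm
  have hbound := ENNReal.tsum_not_primitive_le hn (q := fun a => ENNReal.ofReal (p a))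
    fun a => ENNReal.ofReal_le_ofReal (hps a)
  simp_rw [hweight, ← ENNReal.ofReal_pow hQ, ← ENNReal.ofReal_pow hs,
    ← ENNReal.ofReal_mul (pow_nonneg hQ _), ← ENNReal.ofReal_sum_of_nonneg fun k _ => hterm k,
    ← ENNReal.ofReal_prod_of_nonneg fun i _ => hnn _] at hbound
  rw [tsum_eq_toReal_tsum_ofReal fun w => prod_nonneg fun i _ => hnn _]
  exact ENNReal.toReal_le_of_le_ofReal (sum_nonneg fun k _ => hterm k) hbound

/-- if `0 < p 0 < 1`, the probability that a word of length `n` is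
not primitive is `O(‖p‖₂ⁿ)`: there is `C` with
`P_n(not primitive) ≤ C (∑ i, p i ^ 2)^{n/2}` for all `n ≥ 2`. -/
theorem prob_not_primitive_le (p : ℕ → ℝ) (hnn : ∀ i, 0 ≤ p i) (hsum : Summable p)
    (htot : ∑' i, p i = 1) (hp0 : 0 < p 0) (hp1 : p 0 < 1) :
    ∃ C : ℝ, ∀ n : ℕ, ∀ hn : 2 ≤ n,
      (∑' w : {w : Fin n → ℕ // ¬ Primitive n (by omega) w}, ∏ i, p (w.1 i)) ≤
        C * (∑' i, p i ^ 2) ^ ((n : ℝ) / 2) := by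
  have hsq : Summable fun i => p i ^ 2 := hsum.of_nonneg_of_le (fun i => sq_nonneg _)
    fun i => sq_le (hnn i) (htot ▸ hsum.le_tsum i fun j _ => hnn j)
  obtain ⟨b, hb0, hb⟩ := exists_ne_pos_of_tsum_eq_one hnn htot hp1
  obtain ⟨s, hs0, hsQ, hps⟩ := exists_le_lt_sqrt_tsum_sq hnn hsq hb0.symm hp0 hb
  set Q := ∑' i, p i ^ 2
  have hQ : 0 ≤ Q := tsum_nonneg fun i => sq_nonneg _
  refine ⟨(1 - s / √Q)⁻¹, fun n hn => ?_⟩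
  calc (∑' w : {w : Fin n → ℕ // ¬ Primitive n (by omega) w}, ∏ i, p (w.1 i))
      ≤ ∑ k ∈ n.properDivisors, Q ^ k * s ^ (n - 2 * k) :=
        tsum_not_primitive_le (by omega) hnn hsq hps
    _ ≤ (1 - s / √Q)⁻¹ * √Q ^ n := by
        simpa only [Real.sq_sqrt hQ] using sum_sq_pow_mul_pow_le hs0 hsQ _
          fun k => Nat.two_mul_le_of_mem_properDivisors
    _ = (1 - s / √Q)⁻¹ * Q ^ ((n : ℝ) / 2) := by
        rw [Real.rpow_div_two_eq_sqrt _ hQ, Real.rpow_natCast]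
end

section
/- Let Ω be a probability space, X : Ω → R a bounded random variable, and A ⊆ Ω a measurable event with P(A) > 0. Let ν be the law of X and ν̃ the conditional law of X given A. Then the L²-Wasserstein distance satisfies W_2(ν, ν̃) ≤ 2 · P(Ωc∖A)^{1/2} · ‖X‖_∞, i.e. W_2(ν, ν̃) ≤ 2·sqrt(P(Aᶜ))·‖X‖_∞. -/
open MeasureTheory ProbabilityTheory

/-- The `L²`-Wasserstein distance between two measures on `ℝ`. -/
noncomputable def W2R (μ ν : Measure ℝ) : ℝ :=
  sInf {r : ℝ | ∃ γ : Measure (ℝ × ℝ),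
    γ.map Prod.fst = μ ∧ γ.map Prod.snd = ν ∧
    r = (∫ z, (z.1 - z.2) ^ 2 ∂γ) ^ ((1 : ℝ) / 2)}

/-!
Couple `ν = law(X)` with `ν̃ = law(X | A)` by keeping `X` in place on `A` and, on `Aᶜ`, sending
`X` to an independent sample of `ν̃`. This is a coupling because
`ν = law(X; A) + law(X; Aᶜ)` and `ν̃ = P(A) ν̃ + P(Aᶜ) ν̃ = law(X; A) + P(Aᶜ) ν̃`.
Only the mass `P(Aᶜ)` moves, and it moves by at most `2‖X‖_∞`.
-/

lemma W2R_le_sqrt_integral {μ ν : Measure ℝ} (γ : Measure (ℝ × ℝ))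
    (hγ₁ : γ.map Prod.fst = μ) (hγ₂ : γ.map Prod.snd = ν) :
    W2R μ ν ≤ √(∫ z, (z.1 - z.2) ^ 2 ∂γ) := by
  rw [Real.sqrt_eq_rpow]
  refine csInf_le ⟨0, ?_⟩ ⟨γ, hγ₁, hγ₂, rfl⟩
  rintro _ ⟨γ', -, -, rfl⟩
  exact Real.rpow_nonneg (integral_nonneg fun z => sq_nonneg _) _

lemma integrable_sq_sub_map_diag_and_integral_eq_zero (α : Measure ℝ) :
    Integrable (fun z : ℝ × ℝ => (z.1 - z.2) ^ 2) (α.map fun x => (x, x)) ∧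
      ∫ z, (z.1 - z.2) ^ 2 ∂(α.map fun x => (x, x)) = 0 := by
  have hdiag : Measurable fun x : ℝ => (x, x) := measurable_id.prodMk measurable_id
  have hf : Measurable fun z : ℝ × ℝ => (z.1 - z.2) ^ 2 := by fun_prop
  rw [integrable_map_measure hf.aestronglyMeasurable hdiag.aemeasurable,
    integral_map hdiag.aemeasurable hf.aestronglyMeasurable]
  simp only [Function.comp_def, sub_self, ne_eq, OfNat.ofNat_ne_zero, not_false_eq_true,
    zero_pow, integral_zero, and_true]
  exact integrable_zero _ _ _

lemma integrable_sq_sub_prod_and_integral_le {μ ν : Measure ℝ} [IsFiniteMeasure μ]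
    [IsProbabilityMeasure ν] {C : ℝ} (hμ : ∀ᵐ x ∂μ, |x| ≤ C) (hν : ∀ᵐ x ∂ν, |x| ≤ C) :
    Integrable (fun z : ℝ × ℝ => (z.1 - z.2) ^ 2) (μ.prod ν) ∧
      ∫ z, (z.1 - z.2) ^ 2 ∂(μ.prod ν) ≤ (2 * C) ^ 2 * μ.real Set.univ := by
  have hbound : ∀ᵐ z ∂μ.prod ν, ‖(z.1 - z.2) ^ 2‖ ≤ (2 * C) ^ 2 := by
    filter_upwards [Measure.quasiMeasurePreserving_fst.ae hμ,
      Measure.quasiMeasurePreserving_snd.ae hν] with z h₁ h₂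
    rw [Real.norm_eq_abs, abs_of_nonneg (sq_nonneg _), ← sq_abs]
    gcongr
    linarith [abs_sub z.1 z.2]
  have hmass : (μ.prod ν).real Set.univ = μ.real Set.univ := by
    simp only [measureReal_def, ← Set.univ_prod_univ, Measure.prod_prod, measure_univ, mul_one]
  refine ⟨.of_bound (by fun_prop) _ hbound, ?_⟩
  rw [← hmass]
  exact (Real.le_norm_self _).trans (norm_integral_le_of_norm_le_const hbound)

lemma W2R_add_le {α μ ν : Measure ℝ} [IsFiniteMeasure μ] [IsProbabilityMeasure ν] {C : ℝ}
    (hμ : ∀ᵐ x ∂μ, |x| ≤ C) (hν : ∀ᵐ x ∂ν, |x| ≤ C) :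
    W2R (α + μ) (α + μ Set.univ • ν) ≤ 2 * √(μ.real Set.univ) * C := by
  have hC : 0 ≤ C := hν.exists.elim fun x hx => (abs_nonneg x).trans hx
  have hdiag : Measurable fun x : ℝ => (x, x) := measurable_id.prodMk measurable_id
  set γ := α.map (fun x => (x, x)) + μ.prod ν
  have hγ₁ : γ.map Prod.fst = α + μ := by
    rw [Measure.map_add _ _ measurable_fst, Measure.map_map measurable_fst hdiag,
      Measure.map_fst_prod, measure_univ, one_smul]
    exact congrArg (· + μ) Measure.map_id
  have hγ₂ : γ.map Prod.snd = α + μ Set.univ • ν := by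
    rw [Measure.map_add _ _ measurable_snd, Measure.map_map measurable_snd hdiag,
      Measure.map_snd_prod]
    exact congrArg (· + _) Measure.map_id
  obtain ⟨hint₁, hzero⟩ := integrable_sq_sub_map_diag_and_integral_eq_zero α
  obtain ⟨hint₂, hle⟩ := integrable_sq_sub_prod_and_integral_le hμ hν
  calc W2R (α + μ) (α + μ Set.univ • ν) ≤ √(∫ z, (z.1 - z.2) ^ 2 ∂γ) :=
        W2R_le_sqrt_integral γ hγ₁ hγ₂
    _ ≤ √((2 * C) ^ 2 * μ.real Set.univ) := by
        rw [integral_add_measure hint₁ hint₂, hzero, zero_add]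
        exact Real.sqrt_le_sqrt hle
    _ = 2 * √(μ.real Set.univ) * C := by
        rw [Real.sqrt_mul (sq_nonneg _), Real.sqrt_sq (by positivity)]
        ring

lemma measure_smul_cond {Ω : Type*} [MeasurableSpace Ω] {μ : Measure Ω} {s : Set Ω}
    (hs₀ : μ s ≠ 0) (hs : μ s ≠ ⊤) : μ s • μ[|s] = μ.restrict s := by
  rw [ProbabilityTheory.cond, smul_smul, ENNReal.mul_inv_cancel hs₀ hs, one_smul]

lemma map_cond_eq_map_restrict_add {Ω : Type*} [MeasurableSpace Ω] {P : Measure Ω}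
    [IsProbabilityMeasure P] {A : Set Ω} (hA : MeasurableSet A) (hA₀ : P A ≠ 0) (X : Ω → ℝ) :
    (P[|A]).map X = (P.restrict A).map X + P Aᶜ • (P[|A]).map X := by
  rw [← measure_smul_cond hA₀ (measure_ne_top P A), Measure.map_smul, ← add_smul,
    measure_add_measure_compl hA, measure_univ, one_smul]

/-- for a bounded random variable `X` (with `|X| ≤ C` a.s., `C` an
essential bound playing the role of `‖X‖_∞`) and an event `A` of positive
probability, the law `ν` of `X` and the conditional law `ν̃` of `X` given `A`
satisfy `W₂(ν, ν̃) ≤ 2 √(P(Aᶜ)) · ‖X‖_∞`. -/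
theorem wasserstein_conditional_law (Ω : Type*) [MeasurableSpace Ω]
    (P : Measure Ω) [IsProbabilityMeasure P] (X : Ω → ℝ) (hX : Measurable X)
    (C : ℝ) (hC : ∀ᵐ ω ∂P, |X ω| ≤ C)
    (A : Set Ω) (hA : MeasurableSet A) (hApos : 0 < P A) :
    W2R (P.map X) ((P[|A]).map X) ≤ 2 * Real.sqrt (P Aᶜ).toReal * C := by
  have : IsProbabilityMeasure (P[|A]) := cond_isProbabilityMeasure hApos.ne'
  have : IsProbabilityMeasure ((P[|A]).map X) :=
    Measure.isProbabilityMeasure_map hX.aemeasurable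
  have hbdd (Q : Measure Ω) (hQ : Q ≪ P) : ∀ᵐ x ∂Q.map X, |x| ≤ C :=
    (ae_map_iff hX.aemeasurable (measurableSet_le measurable_abs measurable_const)).2
      (hQ.ae_le hC)
  have hsplit : P.map X = (P.restrict A).map X + (P.restrict Aᶜ).map X := by
    rw [← Measure.map_add _ _ hX, Measure.restrict_add_restrict_compl hA]
  have hmass : (P.restrict Aᶜ).map X Set.univ = P Aᶜ := by
    rw [Measure.map_apply hX .univ, Set.preimage_univ, Measure.restrict_apply_univ]
  have h := W2R_add_le (α := (P.restrict A).map X)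
    (hbdd (P.restrict Aᶜ) Measure.restrict_le_self.absolutelyContinuous)
    (hbdd (P[|A]) cond_absolutelyContinuous)
  rwa [hmass, ← map_cond_eq_map_restrict_add hA hApos.ne', ← hsplit, measureReal_def,
    hmass] at h
end

section
/- Let E_n be the set of words w of length n over alphabet A such that some factor of length ⌈3·log_{1/β} n⌉ appears twice at non-overlapping positions in some cyclic rotation of w, where β = max(p_1, 1−p_1). Then under the product measure P_n with letter distribution p (0 < p_1 < 1), P_n(E_n) = O(n² · β^{3 log_{1/β} n}) = O(1/n). -/
/-!
A repeated factor in a rotation of `w` means that two disjoint windows of `L` cyclically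
consecutive positions, starting at some `a, b ∈ ℤ/n`, carry the same letters. There are at most
`n²` such pairs of windows. For a fixed pair, once the letters outside the first window are chosen,
the letters of the first window are forced, so the event has probability at most `β ^ L`, where
`β` bounds the probability of any single letter. With `L = ⌈3 log_{1/β} n⌉` this gives
`n² β ^ L ≤ n² n⁻³ = 1 / n`.
-/

open scoped ENNReal
open Finset Function

section WordMeasure

variable {α : Type*} {q : α → ℝ≥0∞}

theorem tsum_pi_prod_eq_one (hq : ∑' a, q a = 1) (ι : Type*) [Fintype ι] :
    ∑' w : ι → α, ∏ i, q (w i) = 1 := by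
  refine Fintype.induction_empty_option (P := fun ι _ => ∑' w : ι → α, ∏ i, q (w i) = 1)
    (fun ι κ _ e ih => ?_) (by simp) (fun ι _ ih => ?_) ι
  · let := Fintype.ofEquiv κ e.symm
    rw [← (e.arrowCongr (Equiv.refl α)).tsum_eq, ← ih]
    refine tsum_congr fun w => (Fintype.prod_equiv e _ _ fun i => ?_).symm
    simp
  · rw [← Equiv.piOptionEquivProd.symm.tsum_eq, ENNReal.tsum_prod']
    simp [Fintype.prod_option, ENNReal.tsum_mul_left, ih, hq]

theorem tsum_prod_of_agree_le (hq : ∑' a, q a = 1) {B : ℝ≥0∞} (hB : ∀ a, q a ≤ B)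
    {ι κ : Type*} [Fintype ι] [Fintype κ] {x y : κ → ι} (hx : Injective x)
    (hxy : ∀ k k', x k ≠ y k') :
    ∑' w : {w : ι → α // ∀ k, w (x k) = w (y k)}, ∏ i, q (w.1 i) ≤ B ^ Fintype.card κ := by
  classical
  set S := univ.image x
  have hyS : ∀ k, y k ∉ S := by simpa [S] using fun k k' => hxy k' k
  have hsplit : ∀ w : ι → α, ∏ i, q (w i) ≤ B ^ Fintype.card κ * ∏ i : ↥Sᶜ, q (w i) := by
    intro w
    rw [← prod_mul_prod_compl S, ← prod_coe_sort Sᶜ]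
    gcongr
    calc ∏ i ∈ S, q (w i) = ∏ k, q (w (x k)) := prod_image fun _ _ _ _ h => hx h
      _ ≤ ∏ _k : κ, B := prod_le_prod' fun k _ => hB _
      _ = B ^ Fintype.card κ := by simp
  have hrestrict :
      Injective fun (w : {w : ι → α // ∀ k, w (x k) = w (y k)}) (i : ↥Sᶜ) => w.1 i := by
    intro w w' h
    ext i
    by_cases hi : i ∈ S
    · obtain ⟨k, -, rfl⟩ := mem_image.1 hi
      rw [w.2, w'.2]
      exact congrFun h ⟨y k, mem_compl.2 (hyS k)⟩
    · exact congrFun h ⟨i, mem_compl.2 hi⟩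
  calc _ ≤ ∑' w : {w : ι → α // ∀ k, w (x k) = w (y k)},
          B ^ Fintype.card κ * ∏ i : ↥Sᶜ, q (w.1 i) :=
        ENNReal.tsum_le_tsum fun w => hsplit w.1
    _ ≤ B ^ Fintype.card κ * ∑' v : ↥Sᶜ → α, ∏ i, q (v i) := by
        rw [ENNReal.tsum_mul_left]
        gcongr
        exact ENNReal.tsum_comp_le_tsum_of_injective hrestrict fun v => ∏ i, q (v i)
    _ = B ^ Fintype.card κ := by rw [tsum_pi_prod_eq_one hq, mul_one]

end WordMeasure

section CyclicWindow

open Fin.NatCast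

variable {n : ℕ} [NeZero n]

def cyclicWindow (a : Fin n) (L : ℕ) (t : Fin L) : Fin n := a + ((t : ℕ) : Fin n)

def HasRepeatedCyclicFactor {α : Type*} (L : ℕ) (w : Fin n → α) : Prop :=
  ∃ r s₁ s₂ : ℕ, s₁ + L ≤ s₂ ∧ s₂ + L ≤ n ∧
    ∀ t < L, w ((s₁ + t + r : ℕ) : Fin n) = w ((s₂ + t + r : ℕ) : Fin n)

theorem Fin.natCast_injOn_Iio : Set.InjOn (Nat.cast : ℕ → Fin n) (Set.Iio n) :=
  fun a ha b hb h => by simpa [Fin.ext_iff, Nat.mod_eq_of_lt ha, Nat.mod_eq_of_lt hb] using h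

theorem cyclicWindow_injective {L : ℕ} (hL : L ≤ n) (a : Fin n) :
    Injective (cyclicWindow a L) := fun t t' h =>
  Fin.ext <| Fin.natCast_injOn_Iio (Set.mem_Iio.2 (by omega)) (Set.mem_Iio.2 (by omega))
    (add_left_cancel h)

theorem cyclicWindow_ne_of_disjoint {L s₁ s₂ : ℕ} (h₁ : s₁ + L ≤ s₂) (h₂ : s₂ + L ≤ n) (r : ℕ)
    (t t' : Fin L) :
    cyclicWindow ((s₁ + r : ℕ) : Fin n) L t ≠ cyclicWindow ((s₂ + r : ℕ) : Fin n) L t' := by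
  intro h
  have : ((s₁ + t : ℕ) : Fin n) = ((s₂ + t' : ℕ) : Fin n) := by
    simp only [cyclicWindow, Nat.cast_add] at h ⊢
    rw [add_right_comm, add_right_comm (s₂ : Fin n)] at h
    exact add_right_cancel h
  have := Fin.natCast_injOn_Iio (Set.mem_Iio.2 (by omega)) (Set.mem_Iio.2 (by omega)) this
  omega

theorem HasRepeatedCyclicFactor.exists_disjoint_windows {α : Type*} {L : ℕ} {w : Fin n → α}
    (hw : HasRepeatedCyclicFactor L w) :
    ∃ a b : Fin n, L ≤ n ∧ (∀ t t', cyclicWindow a L t ≠ cyclicWindow b L t') ∧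
      ∀ t, w (cyclicWindow a L t) = w (cyclicWindow b L t) := by
  obtain ⟨r, s₁, s₂, h₁, h₂, hrep⟩ := hw
  refine ⟨(s₁ + r : ℕ), (s₂ + r : ℕ), by omega, cyclicWindow_ne_of_disjoint h₁ h₂ r, fun t => ?_⟩
  simpa [cyclicWindow, add_right_comm] using hrep t t.2

end CyclicWindow

open Fin.NatCast in
theorem tsum_hasRepeatedCyclicFactor_le {α : Type*} {q : α → ℝ≥0∞} (hq : ∑' a, q a = 1)
    {B : ℝ≥0∞} (hB : ∀ a, q a ≤ B) (n L : ℕ) [NeZero n] :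
    ∑' w : {w : Fin n → α // HasRepeatedCyclicFactor L w}, ∏ i, q (w.1 i) ≤ n ^ 2 * B ^ L := by
  classical
  let Agree (ab : Fin n × Fin n) : Set (Fin n → α) :=
    {w | ∀ t, w (cyclicWindow ab.1 L t) = w (cyclicWindow ab.2 L t)}
  let S := univ.filter fun ab : Fin n × Fin n =>
    L ≤ n ∧ ∀ t t', cyclicWindow ab.1 L t ≠ cyclicWindow ab.2 L t'
  have hcover : {w : Fin n → α | HasRepeatedCyclicFactor L w} ⊆ ⋃ ab ∈ S, Agree ab := by
    intro w hw
    obtain ⟨a, b, hL, hdisj, hagree⟩ := hw.exists_disjoint_windows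
    exact Set.mem_biUnion (x := (a, b)) (by simp [S, hL, hdisj]) hagree
  calc _ ≤ ∑' w : ↥(⋃ ab ∈ S, Agree ab), ∏ i, q (w.1 i) :=
        ENNReal.tsum_mono_subtype (fun w => ∏ i, q (w i)) hcover
    _ ≤ ∑ ab ∈ S, ∑' w : Agree ab, ∏ i, q (w.1 i) :=
        ENNReal.tsum_biUnion_le (fun w => ∏ i, q (w i)) S Agree
    _ ≤ ∑ _ab ∈ S, B ^ L := sum_le_sum fun ab hab => by
        obtain ⟨hL, hdisj⟩ := (mem_filter.1 hab).2
        exact (tsum_prod_of_agree_le hq hB (cyclicWindow_injective hL ab.1) hdisj).trans_eq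
          (by rw [Fintype.card_fin])
    _ ≤ ∑ _ab : Fin n × Fin n, B ^ L := sum_le_sum_of_subset (filter_subset _ _)
    _ = n ^ 2 * B ^ L := by simp [sq]

theorem pow_natCeil_mul_logb_le {β x : ℝ} (hβ₀ : 0 < β) (hβ₁ : β < 1) (hx : 0 < x) (c : ℝ) :
    β ^ ⌈c * Real.logb (1 / β) x⌉₊ ≤ x ^ (-c) := by
  calc β ^ ⌈c * Real.logb (1 / β) x⌉₊ ≤ β ^ (c * Real.logb (1 / β) x) := by
        rw [← Real.rpow_natCast]
        exact Real.rpow_le_rpow_of_exponent_ge hβ₀ hβ₁.le (Nat.le_ceil _)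
    _ = x ^ (-c) := by
        rw [one_div, Real.logb_inv_base, mul_neg, ← neg_mul, mul_comm, Real.rpow_mul hβ₀.le,
          Real.rpow_logb hβ₀ hβ₁.ne hx]

theorem sq_mul_pow_natCeil_logb_le {β x : ℝ} (hβ₀ : 0 < β) (hβ₁ : β < 1) (hx : 0 < x) :
    x ^ 2 * β ^ ⌈3 * Real.logb (1 / β) x⌉₊ ≤ 1 / x := calc
  x ^ 2 * β ^ ⌈3 * Real.logb (1 / β) x⌉₊ ≤ x ^ 2 * x ^ (-3 : ℝ) := by
    gcongr
    exact pow_natCeil_mul_logb_le hβ₀ hβ₁ hx 3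
  _ = 1 / x := by
    rw [Real.rpow_neg hx.le, show (3 : ℝ) = (3 : ℕ) by norm_num, Real.rpow_natCast]
    field_simp

theorem le_max_one_sub_of_tsum_eq_one {ι : Type*} {p : ι → ℝ} (hp : ∀ i, 0 ≤ p i)
    (hsum : Summable p) (htot : ∑' i, p i = 1) (a c : ι) : p c ≤ max (p a) (1 - p a) := by
  classical
  rcases eq_or_ne c a with rfl | hca
  · exact le_max_left _ _
  · have := hsum.sum_le_tsum {a, c} fun i _ => hp i
    rw [sum_pair hca.symm, htot] at this
    exact le_max_of_le_right (by linarith)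

theorem tsum_le_of_tsum_ofReal_le {ι : Type*} {f : ι → ℝ} (hf : ∀ i, 0 ≤ f i) {r : ℝ}
    (hr : 0 ≤ r) (h : ∑' i, ENNReal.ofReal (f i) ≤ ENNReal.ofReal r) : ∑' i, f i ≤ r := by
  have hreal : ∑' i, f i = (∑' i, ENNReal.ofReal (f i)).toReal := by
    simp [ENNReal.tsum_toReal_eq, ENNReal.toReal_ofReal, hf]
  exact hreal ▸ ENNReal.toReal_le_of_le_ofReal hr h

/-- let `β = max(p₁, 1−p₁)` and let `E_n` be the set of words `w`
of length `n` such that some cyclic rotation of `w` contains two disjoint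
occurrences of the same factor of length `⌈3 log_{1/β} n⌉`. Then
`P_n(E_n) = O(1/n)`. -/
theorem repeated_factor_probability (p : ℕ → ℝ) (hnn : ∀ i, 0 ≤ p i)
    (hsum : Summable p) (htot : ∑' i, p i = 1)
    (hp0 : 0 < p 0) (hp1 : p 0 < 1) :
    ∃ C : ℝ, ∀ n : ℕ, ∀ hn : 2 ≤ n,
      (∑' w : {w : Fin n → ℕ //
          ∃ r s₁ s₂ : ℕ,
            s₁ + ⌈3 * Real.logb (1 / max (p 0) (1 - p 0)) n⌉₊ ≤ s₂ ∧
            s₂ + ⌈3 * Real.logb (1 / max (p 0) (1 - p 0)) n⌉₊ ≤ n ∧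
            ∀ t : ℕ, ∀ ht : t < ⌈3 * Real.logb (1 / max (p 0) (1 - p 0)) n⌉₊,
              w ⟨(s₁ + t + r) % n, Nat.mod_lt _ (by omega)⟩ =
                w ⟨(s₂ + t + r) % n, Nat.mod_lt _ (by omega)⟩},
        ∏ i, p (w.1 i)) ≤ C / n := by
  refine ⟨1, fun n hn => ?_⟩
  have : NeZero n := ⟨by omega⟩
  set β := max (p 0) (1 - p 0)
  set L := ⌈3 * Real.logb (1 / β) n⌉₊
  have hβ₀ : 0 < β := hp0.trans_le (le_max_left _ _)
  have hβ₁ : β < 1 := max_lt hp1 (by linarith)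
  have hn₀ : (0 : ℝ) < n := by positivity
  have hmass : ∑' w : {w : Fin n → ℕ // HasRepeatedCyclicFactor L w},
      ∏ i, ENNReal.ofReal (p (w.1 i)) ≤ ENNReal.ofReal (n ^ 2 * β ^ L) := by
    rw [ENNReal.ofReal_mul (by positivity), ENNReal.ofReal_pow hn₀.le, ENNReal.ofReal_pow hβ₀.le,
      ENNReal.ofReal_natCast]
    refine tsum_hasRepeatedCyclicFactor_le (q := fun c => ENNReal.ofReal (p c)) ?_
      (fun c => ?_) n L
    · rw [← ENNReal.ofReal_tsum_of_nonneg hnn hsum, htot, ENNReal.ofReal_one]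
    · exact ENNReal.ofReal_le_ofReal (le_max_one_sub_of_tsum_eq_one hnn hsum htot 0 c)
  refine tsum_le_of_tsum_ofReal_le (fun w => prod_nonneg fun i _ => hnn _) (by positivity) ?_
  simp_rw [ENNReal.ofReal_prod_of_nonneg fun i _ => hnn _]
  exact hmass.trans (ENNReal.ofReal_le_ofReal (sq_mul_pow_natCeil_logb_le hβ₀ hβ₁ hn₀))
end

section
/- Every nonempty word w over a totally ordered alphabet has a unique factorization as a nonincreasing product of Lyndon words: w = w_ℓ w_{ℓ−1} ⋯ w_2 w_1 with each w_i a Lyndon word and w_ℓ ≥ w_{ℓ−1} ≥ ⋯ ≥ w_1 in lexicographic order. -/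
/-- A Lyndon word: a nonempty word strictly smaller (lexicographically) than all
of its proper nonempty suffixes. -/
def IsLyndon {α : Type*} [LinearOrder α] (l : List α) : Prop :=
  l ≠ [] ∧ ∀ s : List α, s <:+ l → s ≠ l → s ≠ [] → List.Lex (· < ·) l s

/-!
In a factorization of `w` into a nonincreasing sequence of Lyndon words, the last factor `u` is
the lexicographically least nonempty suffix of `w`: a nonempty suffix of `w` starts with a
nonempty suffix `t` of some factor `v`, and `t ≥ v ≥ u`. So the last factor is determined by `w`,
and uniqueness follows by induction. Conversely, the least nonempty suffix `m` of `w` is a Lyndon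
word; writing `w = p m` and factoring `p`, the last factor `u` of `p` satisfies `m ≤ u m` by
minimality, and for a Lyndon word `m` this forces `m ≤ u`, so appending `m` keeps the
factorization nonincreasing.
-/

namespace List

variable {α : Type*}

theorem suffix_or_eq_append_of_suffix_append {s a b : List α} (h : s <:+ a ++ b) :
    s <:+ b ∨ ∃ t, t <:+ a ∧ t ≠ [] ∧ s = t ++ b := by
  obtain ⟨c, hc⟩ := h
  rcases append_eq_append_iff.mp hc with ⟨t, rfl, rfl⟩ | ⟨c', _, rfl⟩
  · rcases eq_or_ne t [] with rfl | ht
    · simp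
    · exact .inr ⟨t, suffix_append c t, ht, rfl⟩
  · exact .inl (suffix_append c' s)

variable [LinearOrder α]

theorem prefix_or_append_lt_append_of_lt {u v : List α} (h : u < v) :
    u <+: v ∨ ∀ a b : List α, u ++ a < v ++ b := by
  induction h with
  | nil => exact .inl nil_prefix
  | cons h ih =>
    rcases ih with hp | hlt
    · exact .inl ((prefix_cons_inj _).mpr hp)
    · exact .inr fun a b => .cons (hlt a b)
  | rel hab => exact .inr fun a b => .rel hab

theorem exists_minimal_suffix {w : List α} (hw : w ≠ []) :
    ∃ m, m <:+ w ∧ m ≠ [] ∧ ∀ s, s <:+ w → s ≠ [] → m ≤ s := by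
  have hfin : {s | s <:+ w ∧ s ≠ []}.Finite :=
    w.tails.finite_toSet.subset fun s hs => (mem_tails s w).mpr hs.1
  obtain ⟨m, ⟨hm, hmne⟩, hmin⟩ := Set.exists_min_image _ id hfin ⟨w, suffix_refl w, hw⟩
  exact ⟨m, hm, hmne, fun s hs hsne => hmin s ⟨hs, hsne⟩⟩

end List

section Lyndon

variable {α : Type*} [LinearOrder α]

theorem isLyndon_iff_forall_le_suffix {l : List α} :
    IsLyndon l ↔ l ≠ [] ∧ ∀ s, s <:+ l → s ≠ [] → l ≤ s := by
  refine and_congr_right fun _ => forall_congr' fun s => ?_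
  refine ⟨fun h hs hsne => ?_, fun h hs hne hsne => lt_of_le_of_ne (h hs hsne) (Ne.symm hne)⟩
  rcases eq_or_ne s l with rfl | hne
  · exact le_rfl
  · exact le_of_lt (h hs hne hsne)

theorem IsLyndon.le_of_suffix {l s : List α} (hl : IsLyndon l) (hs : s <:+ l) (hsne : s ≠ []) :
    l ≤ s :=
  (isLyndon_iff_forall_le_suffix.mp hl).2 s hs hsne

theorem isLyndon_of_minimal_suffix {w m : List α} (hm : m <:+ w) (hmne : m ≠ [])
    (hmin : ∀ s, s <:+ w → s ≠ [] → m ≤ s) : IsLyndon m :=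
  isLyndon_iff_forall_le_suffix.mpr ⟨hmne, fun s hs => hmin s (hs.trans hm)⟩

theorem IsLyndon.le_of_le_append {m u : List α} (hm : IsLyndon m) (hu : u ≠ [])
    (h : m ≤ u ++ m) : m ≤ u := by
  refine not_lt.mp fun hlt => h.not_gt ?_
  -- Either `m = u ++ x` with `m < x`, so `u ++ m < u ++ x = m`, or `u < m` is decided inside `u`.
  rcases List.prefix_or_append_lt_append_of_lt hlt with ⟨x, rfl⟩ | hext
  · have hx : x ≠ u ++ x := fun hx => hu (by simpa using congrArg List.length hx)
    have hxne : x ≠ [] := by rintro rfl; simp at hlt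
    exact List.append_left_lt (hm.2 x (List.suffix_append u x) hx hxne)
  · simpa using hext m []

def IsLyndonFactorization (f : List (List α)) : Prop :=
  (∀ x ∈ f, IsLyndon x) ∧ f.IsChain (· ≥ ·)

theorem exists_le_of_suffix_flatten {f : List (List α)} (hf : ∀ x ∈ f, IsLyndon x) {s : List α}
    (hs : s <:+ f.flatten) (hsne : s ≠ []) : ∃ x ∈ f, x ≤ s := by
  induction f with
  | nil => exact absurd (List.suffix_nil.mp hs) hsne
  | cons v f ih =>
    rcases List.suffix_or_eq_append_of_suffix_append hs with hs | ⟨t, ht, htne, rfl⟩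
    · obtain ⟨x, hx, hxs⟩ := ih (fun x hx => hf x (List.mem_cons_of_mem v hx)) hs
      exact ⟨x, List.mem_cons_of_mem v hx, hxs⟩
    · have hvt : v ≤ t := (hf v List.mem_cons_self).le_of_suffix ht htne
      exact ⟨v, List.mem_cons_self, hvt.trans (not_lt.mp List.le_append_left)⟩

namespace IsLyndonFactorization

theorem of_append_singleton {f : List (List α)} {u : List α}
    (h : IsLyndonFactorization (f ++ [u])) : IsLyndonFactorization f :=
  ⟨fun x hx => h.1 x (List.mem_append_left _ hx), h.2.left_of_append⟩

theorem eq_nil_of_flatten_eq_nil {f : List (List α)} (h : IsLyndonFactorization f)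
    (hf : f.flatten = []) : f = [] :=
  List.eq_nil_iff_forall_not_mem.mpr fun x hx => (h.1 x hx).1 (List.flatten_eq_nil_iff.mp hf x hx)

theorem le_of_suffix_flatten {f : List (List α)} {u s : List α}
    (h : IsLyndonFactorization (f ++ [u])) (hs : s <:+ (f ++ [u]).flatten) (hsne : s ≠ []) :
    u ≤ s := by
  obtain ⟨x, hx, hxs⟩ := exists_le_of_suffix_flatten h.1 hs hsne
  have hsorted := List.isChain_iff_pairwise.mp h.2
  rcases List.mem_append.mp hx with hx | hx
  · exact (List.pairwise_append.mp hsorted).2.2 x hx u (List.mem_singleton_self u) |>.trans hxs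
  · exact List.mem_singleton.mp hx ▸ hxs

theorem eq_of_flatten_eq {f g : List (List α)} (hf : IsLyndonFactorization f)
    (hg : IsLyndonFactorization g) (h : f.flatten = g.flatten) : f = g := by
  induction f using List.reverseRecOn generalizing g with
  | nil => exact (hg.eq_nil_of_flatten_eq_nil h.symm).symm
  | append_singleton f u ih =>
    rcases List.eq_nil_or_concat' g with rfl | ⟨g, v, rfl⟩
    · exact hf.eq_nil_of_flatten_eq_nil h
    have last_suffix : ∀ {k : List (List α)} {x : List α}, x <:+ (k ++ [x]).flatten := by
      intro k x; simp
    have huv : u = v := le_antisymm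
      (hf.le_of_suffix_flatten (h ▸ last_suffix) (hg.1 v (by simp)).1)
      (hg.le_of_suffix_flatten (h ▸ last_suffix) (hf.1 u (by simp)).1)
    subst huv
    simp only [List.flatten_append, List.flatten_singleton] at h
    rw [ih hf.of_append_singleton hg.of_append_singleton (List.append_cancel_right h)]

end IsLyndonFactorization

theorem exists_isLyndonFactorization (w : List α) :
    ∃ f, IsLyndonFactorization f ∧ f.flatten = w := by
  rcases eq_or_ne w [] with rfl | hw
  · exact ⟨[], ⟨by simp, List.isChain_nil⟩, rfl⟩
  obtain ⟨m, ⟨p, rfl⟩, hmne, hmin⟩ := List.exists_minimal_suffix hw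
  have hm : IsLyndon m := isLyndon_of_minimal_suffix (List.suffix_append p m) hmne hmin
  have : p.length < (p ++ m).length := by simpa [List.length_pos_iff] using hmne
  obtain ⟨f, hf, rfl⟩ := exists_isLyndonFactorization p
  refine ⟨f ++ [m], ⟨?_, hf.2.append (List.isChain_singleton m) ?_⟩, by simp⟩
  · simpa [or_imp, forall_and] using ⟨hf.1, hm⟩
  rcases List.eq_nil_or_concat' f with rfl | ⟨f, u, rfl⟩
  · simp
  simp only [List.getLast?_concat, List.head?_cons, Option.mem_some_iff]
  rintro _ rfl _ rfl
  exact hm.le_of_le_append (hf.1 u (by simp)).1 (hmin _ ⟨f.flatten, by simp⟩ (by simp [hmne]))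
termination_by w.length

end Lyndon

theorem lyndon_factorization_exists_unique_general {α : Type*} [LinearOrder α]
    (w : List α) :
    ∃! f : List (List α),
      (∀ x ∈ f, IsLyndon x) ∧
      List.Chain' (fun a b => ¬ List.Lex (· < ·) a b) f ∧
      f.flatten = w := by
  obtain ⟨f, hf, rfl⟩ := exists_isLyndonFactorization w
  refine ⟨f, ⟨hf.1, hf.2.imp fun _ _ => not_lt.mpr, rfl⟩, fun g ⟨hgL, hgC, hg⟩ => ?_⟩
  exact IsLyndonFactorization.eq_of_flatten_eq ⟨hgL, hgC.imp fun _ _ => not_lt.mp⟩ hf hg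

/-- Chen–Fox–Lyndon: every nonempty word has a unique
factorization as a nonincreasing concatenation of Lyndon words. -/
theorem lyndon_factorization_exists_unique {α : Type*} [LinearOrder α]
    (w : List α) (hw : w ≠ []) :
    ∃! f : List (List α),
      (∀ x ∈ f, IsLyndon x) ∧
      List.Chain' (fun a b => ¬ List.Lex (· < ·) a b) f ∧
      f.flatten = w :=
  lyndon_factorization_exists_unique_general w
end
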